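/- Let a group K act on a group H by automorphisms such that the induced action on H^{ab} is trivial. Then for every i ≥ 1, Γ_i(H ⋊ K) = Γ_i(H) ⋊ Γ_i(K), i.e. the i-th term of the lower central series of the semidirect product is generated by Γ_i(H) and Γ_i(K), and its intersection with H is Γ_i(H). -/

import Mathlib

/-!
Inside `G = H ⋊ K` the hypothesis reads `⁅K, H⁆ ≤ ⁅H, H⁆`, and the three subgroups lemma
propagates it to `⁅Γ_i(K), Γ_j(H)⁆ ≤ Γ_{i+j+1}(H)`: the action of `Γ_i(K)` on `H` raises the lower
central filtration of `H` by `i`. Hence the commutator of an element of `Γ_i(K) Γ_i(H)` with an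
element of `G = K H` lies in `Γ_{i+1}(H) Γ_{i+1}(K)`, and by induction `Γ_i(G) = Γ_i(H) Γ_i(K)`.
Since `H ∩ K = 1`, intersecting with `H` leaves `Γ_i(H)`.
-/

open scoped commutatorElement

namespace Subgroup

variable {G : Type*} [Group G]

theorem commutator_commutator_le_of_rotate {H₁ H₂ H₃ M : Subgroup G} [M.Normal]
    (h1 : ⁅⁅H₂, H₃⁆, H₁⁆ ≤ M) (h2 : ⁅⁅H₃, H₁⁆, H₂⁆ ≤ M) : ⁅⁅H₁, H₂⁆, H₃⁆ ≤ M := by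
  simp only [← QuotientGroup.ker_mk' M, ← map_eq_bot_iff, map_commutator] at h1 h2 ⊢
  exact commutator_commutator_eq_bot_of_rotate h1 h2

theorem commutator_sup_right_le {H₁ H₂ H₃ M : Subgroup G} [M.Normal]
    (h₂ : ⁅H₁, H₂⁆ ≤ M) (h₃ : ⁅H₁, H₃⁆ ≤ M) : ⁅H₁, H₂ ⊔ H₃⁆ ≤ M := by
  simp only [← QuotientGroup.ker_mk' M, ← map_eq_bot_iff, map_commutator, map_sup] at h₂ h₃ ⊢
  rw [commutator_comm, commutator_eq_bot_iff_le_centralizer] at h₂ h₃ ⊢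
  exact sup_le h₂ h₃

theorem commutator_lowerCentralSeries_le_of_commutator_le (S : Subgroup G) (A : ℕ → Subgroup G)
    [∀ j, (A j).Normal] (hA : ∀ j, ⁅S, A j⁆ ≤ A (j + 1)) (i j : ℕ) :
    ⁅S.lowerCentralSeries i, A j⁆ ≤ A (i + j + 1) := by
  induction i generalizing j with
  | zero => simpa using hA j
  | succ i ih =>
    rw [lowerCentralSeries_succ]
    apply commutator_commutator_le_of_rotate
    · calc ⁅⁅S, A j⁆, S.lowerCentralSeries i⁆
          ≤ ⁅S.lowerCentralSeries i, A (j + 1)⁆ := (commutator_mono (hA j) le_rfl).trans_eq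
            (commutator_comm _ _)
        _ ≤ A (i + (j + 1) + 1) := ih (j + 1)
        _ = A (i + 1 + j + 1) := by rw [Nat.add_right_comm i 1 j, Nat.add_assoc i j 1]
    · calc ⁅⁅A j, S.lowerCentralSeries i⁆, S⁆
          ≤ ⁅S, A (i + j + 1)⁆ :=
            (commutator_mono ((commutator_comm _ _).trans_le (ih j)) le_rfl).trans_eq
              (commutator_comm _ _)
        _ ≤ A (i + j + 1 + 1) := hA _
        _ = A (i + 1 + j + 1) := by rw [Nat.add_right_comm i 1 j]

theorem commutator_lowerCentralSeries_lowerCentralSeries_le (N : Subgroup G) [N.Normal]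
    (m n : ℕ) :
    ⁅N.lowerCentralSeries m, N.lowerCentralSeries n⁆ ≤ N.lowerCentralSeries (m + n + 1) :=
  commutator_lowerCentralSeries_le_of_commutator_le N N.lowerCentralSeries
    (fun _ ↦ (commutator_comm _ _).le) m n

variable (N Q : Subgroup G) [N.Normal]

theorem commutator_lowerCentralSeries_le_succ (hQN : ⁅Q, N⁆ ≤ N.lowerCentralSeries 1) (j : ℕ) :
    ⁅Q, N.lowerCentralSeries j⁆ ≤ N.lowerCentralSeries (j + 1) := by
  induction j with
  | zero => exact hQN
  | succ j ih =>
    rw [lowerCentralSeries_succ, commutator_comm]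
    apply commutator_commutator_le_of_rotate
    · calc ⁅⁅N, Q⁆, N.lowerCentralSeries j⁆
          ≤ ⁅N.lowerCentralSeries 1, N.lowerCentralSeries j⁆ :=
            commutator_mono ((commutator_comm _ _).trans_le hQN) le_rfl
        _ ≤ N.lowerCentralSeries (1 + j + 1) :=
            commutator_lowerCentralSeries_lowerCentralSeries_le N 1 j
        _ = N.lowerCentralSeries (j + 1 + 1) := by rw [Nat.add_comm 1 j]
    · exact commutator_mono ih le_rfl

theorem commutator_mem_lowerCentralSeries_sup (hQN : ⁅Q, N⁆ ≤ N.lowerCentralSeries 1)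
    (hNQ : N ⊔ Q = ⊤) {i : ℕ} {g : G}
    (hg : g ∈ N.lowerCentralSeries i ⊔ Q.lowerCentralSeries i) (t : G) :
    ⁅g, t⁆ ∈ N.lowerCentralSeries (i + 1) ⊔ Q.lowerCentralSeries (i + 1) := by
  have ht : t ∈ Q ⊔ N := sup_comm N Q ▸ hNQ ▸ mem_top t
  rw [sup_comm] at hg
  obtain ⟨q, hq, n, hn, rfl⟩ := mem_sup_of_normal_right.mp hg
  obtain ⟨r, hr, m, hm, rfl⟩ := mem_sup_of_normal_right.mp ht
  have hQNi := commutator_lowerCentralSeries_le_succ N Q hQN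
  have hnt : ⁅n, r * m⁆ ∈ N.lowerCentralSeries (i + 1) :=
    commutator_sup_right_le ((commutator_comm _ _).trans_le (hQNi i)) le_rfl
      (commutator_mem_commutator hn ht)
  have hqr : ⁅q, r⁆ ∈ Q.lowerCentralSeries (i + 1) := commutator_mem_commutator hq hr
  have hqm : ⁅q, m⁆ ∈ N.lowerCentralSeries (i + 1) :=
    commutator_lowerCentralSeries_le_of_commutator_le Q _ hQNi i 0
      (commutator_mem_commutator hq hm)
  -- `⁅q n, r m⁆ = q ⁅n, r m⁆ q⁻¹ * (⁅q, r⁆ * r ⁅q, m⁆ r⁻¹)`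
  rw [commutatorElement_mul_left_eq_conj_mul, commutatorElement_mul_right_eq_mul_conj q r m,
    mul_assoc ⁅q, r⁆, mul_assoc ⁅q, r⁆]
  exact mul_mem (mem_sup_left (Normal.conj_mem inferInstance _ hnt q))
    (mul_mem (mem_sup_right hqr) (mem_sup_left (Normal.conj_mem inferInstance _ hqm r)))

theorem top_lowerCentralSeries_eq_sup (hQN : ⁅Q, N⁆ ≤ N.lowerCentralSeries 1)
    (hNQ : N ⊔ Q = ⊤) (i : ℕ) :
    (⊤ : Subgroup G).lowerCentralSeries i = N.lowerCentralSeries i ⊔ Q.lowerCentralSeries i := by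
  refine le_antisymm ?_
    (sup_le (lowerCentralSeries_mono i le_top) (lowerCentralSeries_mono i le_top))
  induction i with
  | zero => exact hNQ.ge
  | succ i ih =>
    rw [lowerCentralSeries_succ, commutator_le]
    exact fun g hg t _ ↦ commutator_mem_lowerCentralSeries_sup N Q hQN hNQ (ih hg) t

theorem inf_lowerCentralSeries_sup_eq (hNQ : Disjoint N Q) (i : ℕ) :
    N ⊓ (N.lowerCentralSeries i ⊔ Q.lowerCentralSeries i) = N.lowerCentralSeries i := by
  refine le_antisymm ?_ (le_inf (lowerCentralSeries_le_self N i) le_sup_left)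
  rintro _ ⟨hxN, hx⟩
  obtain ⟨a, ha, b, hb, rfl⟩ := mem_sup_of_normal_left.mp hx
  have hbN : b ∈ N := by
    simpa using N.mul_mem (N.inv_mem (lowerCentralSeries_le_self N i ha)) hxN
  rw [hNQ.le_bot ⟨hbN, lowerCentralSeries_le_self Q i hb⟩, mul_one]
  exact ha

end Subgroup

namespace SemidirectProduct

variable {H K : Type*} [Group H] [Group K] (φ : K →* MulAut H)

instance normal_range_inl : (inl : H →* H ⋊[φ] K).range.Normal :=
  range_inl_eq_ker_rightHom (φ := φ) ▸ inferInstance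

theorem range_inl_sup_range_inr :
    (inl : H →* H ⋊[φ] K).range ⊔ (inr : K →* H ⋊[φ] K).range = ⊤ :=
  eq_top_iff.mpr fun g _ ↦
    inl_left_mul_inr_right g ▸ Subgroup.mul_mem_sup ⟨g.left, rfl⟩ ⟨g.right, rfl⟩

theorem disjoint_range_inl_range_inr :
    Disjoint (inl : H →* H ⋊[φ] K).range (inr : K →* H ⋊[φ] K).range := by
  rw [Subgroup.disjoint_def]
  rintro _ ⟨h, rfl⟩ ⟨k, hk⟩
  have hk1 : k = 1 := by simpa using congrArg right hk
  rw [← hk, hk1, map_one]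

theorem commutatorElement_inr_inl (k : K) (h : H) :
    ⁅(inr k : H ⋊[φ] K), (inl h : H ⋊[φ] K)⁆ = inl (φ k h * h⁻¹) := by
  ext <;> simp [commutatorElement_def]

theorem commutator_range_inr_range_inl_le (hab : ∀ k h, φ k h * h⁻¹ ∈ commutator H) :
    ⁅(inr : K →* H ⋊[φ] K).range, (inl : H →* H ⋊[φ] K).range⁆ ≤
      (inl : H →* H ⋊[φ] K).range.lowerCentralSeries 1 := by
  rw [Subgroup.commutator_le]
  rintro _ ⟨k, rfl⟩ _ ⟨h, rfl⟩
  rw [commutatorElement_inr_inl, MonoidHom.range_eq_map, ← Subgroup.map_lowerCentralSeries,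
    Subgroup.top_lowerCentralSeries_one]
  exact ⟨_, hab k h, rfl⟩

end SemidirectProduct

open Subgroup SemidirectProduct in
/-- For an almost-direct product (the action of `K` on `H^{ab}` is trivial),
`Γ_i(H ⋊ K) = Γ_i(H) ⋊ Γ_i(K)`: it is generated by `Γ_i(H)` and `Γ_i(K)`, and its
intersection with `H` is `Γ_i(H)` (0-based indexing). -/
theorem lowerCentralSeries_almost_direct_product {H K : Type*} [Group H] [Group K]
    (φ : K →* MulAut H)
    (hab : ∀ (k : K) (h : H), φ k h * h⁻¹ ∈ commutator H) (i : ℕ) :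
    (⊤ : Subgroup (H ⋊[φ] K)).lowerCentralSeries i =
        ((⊤ : Subgroup H).lowerCentralSeries i).map (SemidirectProduct.inl : H →* H ⋊[φ] K) ⊔
          ((⊤ : Subgroup K).lowerCentralSeries i).map (SemidirectProduct.inr : K →* H ⋊[φ] K) ∧
      ((⊤ : Subgroup (H ⋊[φ] K)).lowerCentralSeries i).comap (SemidirectProduct.inl : H →* H ⋊[φ] K) =
        (⊤ : Subgroup H).lowerCentralSeries i := by
  have hsup := top_lowerCentralSeries_eq_sup _ _ (commutator_range_inr_range_inl_le φ hab)
    (range_inl_sup_range_inr φ) i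
  simp only [map_lowerCentralSeries, ← MonoidHom.range_eq_map]
  refine ⟨hsup, ?_⟩
  calc comap inl ((⊤ : Subgroup (H ⋊[φ] K)).lowerCentralSeries i)
      = comap inl ((inl : H →* H ⋊[φ] K).range ⊓
          (⊤ : Subgroup (H ⋊[φ] K)).lowerCentralSeries i) := by
        rw [comap_inf, MonoidHom.comap_range_self, top_inf_eq]
    _ = comap inl ((inl : H →* H ⋊[φ] K).range.lowerCentralSeries i) := by
        rw [hsup, inf_lowerCentralSeries_sup_eq _ _ (disjoint_range_inl_range_inr φ)]
    _ = (⊤ : Subgroup H).lowerCentralSeries i := by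
        rw [MonoidHom.range_eq_map, ← map_lowerCentralSeries,
          comap_map_eq_self_of_injective inl_injective]
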